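/- arXiv:1803.08417 — 6 statements merged into one kernel-verified Lean document; each statement's English description precedes it below -/
import Mathlib

section
/- Let N be a finite abelian group and A a group of automorphisms of N acting freely on N ∖ {0}. Then the induced action of A on the character group Hom(N, ℂˣ) is free on the set of nontrivial characters: if a ∈ A and χ is a nontrivial character with χ ∘ a⁻¹ = χ, then a = 1. -/
/-!
If `a ≠ 1`, freeness says `a` has no nonzero fixed point, so `x ↦ a x - x` is an injective
endomorphism of the finite group `N`, hence surjective. A character fixed by `a` kills every
`a x - x`, so it kills all of `N`.
-/

namespace AddMonoidHom

variable {N : Type*} [AddCommGroup N]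

theorem sub_id_injective {f : N →+ N} (hf : ∀ x, f x = x → x = 0) :
    Function.Injective (f - AddMonoidHom.id N) :=
  (injective_iff_map_eq_zero _).2 fun x hx => hf x (sub_eq_zero.1 hx)

theorem sub_id_surjective [Finite N] {f : N →+ N} (hf : ∀ x, f x = x → x = 0) :
    Function.Surjective (f - AddMonoidHom.id N) :=
  Finite.surjective_of_injective (sub_id_injective hf)

theorem eq_zero_of_comp_eq_self {M : Type*} [AddGroup M] {f : N →+ N}
    (hf : Function.Surjective (f - AddMonoidHom.id N)) {χ : N →+ M} (hχ : χ.comp f = χ) :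
    χ = 0 := by
  ext y
  obtain ⟨x, rfl⟩ := hf y
  have hχx : χ (f x) = χ x := DFunLike.congr_fun hχ x
  simp [map_sub, hχx]

end AddMonoidHom

/-- Free action lemma: if a group `A` of automorphisms of a finite abelian group `N` acts
freely on `N \ {0}`, then the induced action on the character group `Hom(N, ℂˣ)`
(given by `a · χ = χ ∘ a⁻¹`) is free on the set of nontrivial characters. -/
theorem free_action_on_characters
    {N : Type*} [AddCommGroup N] [Finite N]
    (A : AddSubgroup (AddAut N))
    (hfree : ∀ a ∈ A, ∀ x : N, x ≠ 0 → a x = x → a = 0)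
    (a : AddAut N) (ha : a ∈ A)
    (χ : N →+ Additive ℂˣ) (hχ : χ ≠ 0)
    (hfix : ∀ x : N, χ ((-a) x) = χ x) :
    a = 0 := by
  by_contra hne
  have hno_fixed : ∀ x, (a : N →+ N) x = x → x = 0 := fun x hx =>
    by_contra fun hx0 => hne (hfree a ha x hx0 hx)
  have hχa : χ.comp (a : N →+ N) = χ := AddMonoidHom.ext fun x => by
    simpa using (hfix (a x)).symm
  exact hχ (AddMonoidHom.eq_zero_of_comp_eq_self (AddMonoidHom.sub_id_surjective hno_fixed) hχa)
end

section
/- Let G be a finite group with an irreducible complex representation V of degree d strictly exceeding the index of every nonabelian subgroup of G. Then for any two noncommuting elements x, y ∈ G, their images in GL(V) do not share a common eigenvector. -/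
/-!
The elements of `G` having `v` as an eigenvector form a subgroup `K`, which is nonabelian
as soon as it contains `x` and `y`. Every vector of the orbit `G • v` is then a multiple of
`ρ gᵢ v` for one of the `[G : K]` coset representatives `gᵢ`, and these orbit vectors span the
irreducible `V`. Hence `dim V ≤ [G : K]`, contradicting the hypothesis on nonabelian subgroups.
-/

namespace Representation

variable {k G V : Type*} [Field k] [Group G] [AddCommGroup V] [Module k V]

def eigenStabilizer (ρ : Representation k G V) (v : V) : Subgroup G where
  carrier := {g | ∃ c : k, ρ g v = c • v}
  one_mem' := ⟨1, by simp⟩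
  mul_mem' := by
    rintro a b ⟨c, hc⟩ ⟨d, hd⟩
    exact ⟨c * d, by rw [map_mul, Module.End.mul_apply, hd, map_smul, hc, smul_smul, mul_comm]⟩
  inv_mem' := by
    rintro g ⟨c, hc⟩
    have hv : v = c • ρ g⁻¹ v := by
      rw [← map_smul, ← hc, ← Module.End.mul_apply, ← map_mul, inv_mul_cancel, map_one,
        Module.End.one_apply]
    by_cases hc0 : c = 0
    · rw [hc0, zero_smul] at hv
      exact ⟨0, by rw [hv, map_zero, smul_zero]⟩
    · exact ⟨c⁻¹, (eq_inv_smul_iff₀ hc0).mpr hv.symm⟩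

variable (ρ : Representation k G V)

theorem span_orbit_eq_top
    (hirr : ∀ W : Submodule k V, (∀ (g : G) (v : V), v ∈ W → ρ g v ∈ W) → W = ⊥ ∨ W = ⊤)
    {v : V} (hv : v ≠ 0) : Submodule.span k (Set.range fun g => ρ g v) = ⊤ := by
  refine (hirr _ fun g w hw => ?_).resolve_left fun h => hv ?_
  · induction hw using Submodule.span_induction with
    | mem _ hw =>
      obtain ⟨g', rfl⟩ := hw
      exact Submodule.subset_span ⟨g * g', by simp only [map_mul, Module.End.mul_apply]⟩
    | zero => simp
    | add _ _ _ _ hu hw => simpa only [map_add] using add_mem hu hw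
    | smul a _ _ hw => simpa only [map_smul] using Submodule.smul_mem _ a hw
  · rw [← Submodule.mem_bot k, ← h]
    exact Submodule.subset_span ⟨1, by simp⟩

theorem span_orbit_le_span_cosetReps (v : V) :
    Submodule.span k (Set.range fun g => ρ g v) ≤
      Submodule.span k (Set.range fun q : G ⧸ ρ.eigenStabilizer v => ρ q.out v) := by
  refine Submodule.span_le.mpr ?_
  rintro _ ⟨g, rfl⟩
  obtain ⟨h, hh⟩ := QuotientGroup.mk_out_eq_mul (ρ.eigenStabilizer v) g
  set r := (g : G ⧸ ρ.eigenStabilizer v).out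
  obtain ⟨c, hc⟩ : (h : G)⁻¹ ∈ ρ.eigenStabilizer v := inv_mem h.2
  have hgv : ρ g v = c • ρ r v := by
    rw [show g = r * (h : G)⁻¹ by rw [hh]; group, map_mul, Module.End.mul_apply, hc, map_smul]
  simp only [SetLike.mem_coe, hgv]
  exact Submodule.smul_mem _ c (Submodule.subset_span ⟨_, rfl⟩)

theorem finrank_le_index_eigenStabilizer
    (hirr : ∀ W : Submodule k V, (∀ (g : G) (v : V), v ∈ W → ρ g v ∈ W) → W = ⊥ ∨ W = ⊤)
    {v : V} (hv : v ≠ 0) [(ρ.eigenStabilizer v).FiniteIndex] :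
    Module.finrank k V ≤ (ρ.eigenStabilizer v).index := by
  let _ := (ρ.eigenStabilizer v).fintypeQuotientOfFiniteIndex
  have hreps : Submodule.span k
      (Set.range fun q : G ⧸ ρ.eigenStabilizer v => ρ q.out v) = ⊤ :=
    eq_top_iff.mpr (ρ.span_orbit_eq_top hirr hv ▸ ρ.span_orbit_le_span_cosetReps v)
  calc Module.finrank k V
      = (Set.range fun q : G ⧸ ρ.eigenStabilizer v => ρ q.out v).finrank k := by
        rw [Set.finrank, hreps, finrank_top]
    _ ≤ Fintype.card (G ⧸ ρ.eigenStabilizer v) := finrank_range_le_card _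
    _ = (ρ.eigenStabilizer v).index := by
        rw [Subgroup.index_eq_card, Nat.card_eq_fintype_card]

end Representation

theorem big_irrep_no_common_eigenvector_general
    {G V : Type*} [Group G] [Finite G] [AddCommGroup V] [Module ℂ V]
    (ρ : Representation ℂ G V)
    (hirr : ∀ W : Submodule ℂ V, (∀ (g : G) (v : V), v ∈ W → ρ g v ∈ W) → W = ⊥ ∨ W = ⊤)
    (hbig : ∀ H : Subgroup G, (∃ x ∈ H, ∃ y ∈ H, x * y ≠ y * x) →
      H.index < Module.finrank ℂ V)
    (x y : G) (hxy : x * y ≠ y * x) :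
    ¬∃ v : V, v ≠ 0 ∧ (∃ α : ℂ, ρ x v = α • v) ∧ (∃ β : ℂ, ρ y v = β • v) := by
  rintro ⟨v, hv, hx, hy⟩
  have hsmall := hbig (ρ.eigenStabilizer v) ⟨x, hx, y, hy, hxy⟩
  have hlarge := ρ.finrank_le_index_eigenStabilizer hirr hv
  omega

/-- If a finite group `G` has an irreducible complex representation `V` whose dimension
strictly exceeds the index of every nonabelian subgroup, then no pair of noncommuting
elements of `G` shares a common eigenvector in `V`. -/
theorem big_irrep_no_common_eigenvector
    {G V : Type*} [Group G] [Finite G] [AddCommGroup V] [Module ℂ V]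
    [FiniteDimensional ℂ V]
    (ρ : Representation ℂ G V)
    (hirr : ∀ W : Submodule ℂ V, (∀ (g : G) (v : V), v ∈ W → ρ g v ∈ W) → W = ⊥ ∨ W = ⊤)
    (hbig : ∀ H : Subgroup G, (∃ x ∈ H, ∃ y ∈ H, x * y ≠ y * x) →
      H.index < Module.finrank ℂ V)
    (x y : G) (hxy : x * y ≠ y * x) :
    ¬∃ v : V, v ≠ 0 ∧ (∃ α : ℂ, ρ x v = α • v) ∧ (∃ β : ℂ, ρ y v = β • v) :=
  big_irrep_no_common_eigenvector_general ρ hirr hbig x y hxy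
end

section
/- Let p be a prime with p ≡ 1 (mod 4) and let d = (p+1)/2. Then there exists an automorphism A of (ℤ/pℤ)² of order d, and every nonzero power Aᵏ (1 ≤ k ≤ d−1) acts on (ℤ/pℤ)² without nonzero fixed points; equivalently, the cyclic group ⟨A⟩ acts freely on (ℤ/pℤ)² ∖ {0}. -/
/-!
Read `(ℤ/pℤ)²` additively as `𝔽_{p²}`. As `d = (p + 1) / 2` divides `p² - 1 = |𝔽_{p²}ˣ|` and
`𝔽_{p²}ˣ` is cyclic, there is a unit `α` of order `d`, and `A` is multiplication by `α`.
In a field `αᵏ x = x` with `x ≠ 0` forces `αᵏ = 1`, so no power `Aᵏ` with `0 < k < d` has a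
nonzero fixed point.
-/

open Additive

theorem Nat.Prime.half_succ_dvd_sq_sub_one {p : ℕ} (hp : p.Prime) : (p + 1) / 2 ∣ p ^ 2 - 1 := by
  rcases hp.eq_two_or_odd' with rfl | hodd
  · norm_num
  · rw [← one_pow 2, Nat.sq_sub_sq]
    exact (Nat.div_dvd_of_dvd (even_iff_two_dvd.mp hodd.add_one)).mul_right _

theorem IsCyclic.exists_orderOf_eq_of_dvd {G : Type*} [Group G] [IsCyclic G] [Finite G] {d : ℕ}
    (hd : d ∣ Nat.card G) : ∃ g : G, orderOf g = d := by
  obtain ⟨g, hg⟩ := IsCyclic.exists_ofOrder_eq_natCard (α := G)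
  refine ⟨g ^ (Nat.card G / d), ?_⟩
  rw [orderOf_pow, hg, Nat.gcd_eq_right (Nat.div_dvd_of_dvd hd),
    Nat.div_div_self hd Nat.card_pos.ne']

section TransportedMulLeft

variable {R V : Type*} [Ring R] [AddGroup V]

noncomputable def transportedMulLeft (e : R ≃+ V) : Additive Rˣ →+ AddAut V :=
  (AddAut.congr e).toAddMonoidHom.comp (MonoidHom.toAdditiveLeft AddAut.mulLeft)

theorem transportedMulLeft_apply (e : R ≃+ V) (u : Rˣ) (x : V) :
    transportedMulLeft e (ofMul u) x = e (u * e.symm x) := rfl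

theorem transportedMulLeft_injective (e : R ≃+ V) : Function.Injective (transportedMulLeft e) := by
  intro u v h
  have := congrArg (fun f : AddAut V => e.symm (f (e 1))) h
  rw [← ofMul_toMul u, ← ofMul_toMul v] at this
  simp only [transportedMulLeft_apply, AddEquiv.symm_apply_apply, mul_one] at this
  exact toMul.injective (Units.ext this)

theorem addOrderOf_transportedMulLeft (e : R ≃+ V) (u : Rˣ) :
    addOrderOf (transportedMulLeft e (ofMul u)) = orderOf u := by
  rw [addOrderOf_injective _ (transportedMulLeft_injective e), addOrderOf_ofMul_eq_orderOf]

theorem transportedMulLeft_apply_eq_self_iff [IsRightCancelMulZero R] (e : R ≃+ V) (u : Rˣ)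
    (x : V) : transportedMulLeft e (ofMul u) x = x ↔ u = 1 ∨ x = 0 := by
  rw [transportedMulLeft_apply, ← e.eq_symm_apply, mul_left_eq_self₀, Units.val_eq_one,
    AddEquivClass.map_eq_zero_iff]

end TransportedMulLeft

theorem exists_addAut_order_half_p_add_one_free_general
    (p : ℕ) (hp : p.Prime) (d : ℕ) (hd : d = (p + 1) / 2) :
    ∃ A : AddAut (ZMod p × ZMod p), addOrderOf A = d ∧
      ∀ k : ℕ, 1 ≤ k → k ≤ d - 1 →
        ∀ x : ZMod p × ZMod p, x ≠ 0 → (k • A) x ≠ x := by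
  have : Fact p.Prime := ⟨hp⟩
  let K := GaloisField p 2
  have hdvd : d ∣ Nat.card Kˣ := by
    rw [Nat.card_units, GaloisField.card p 2 two_ne_zero, hd]
    exact hp.half_succ_dvd_sq_sub_one
  obtain ⟨α, hα⟩ := IsCyclic.exists_orderOf_eq_of_dvd hdvd
  have hrank : Module.finrank (ZMod p) K = Module.finrank (ZMod p) (ZMod p × ZMod p) := by
    simp [K, GaloisField.finrank p two_ne_zero]
  let e : K ≃+ ZMod p × ZMod p := (LinearEquiv.ofFinrankEq _ _ hrank).toAddEquiv
  refine ⟨transportedMulLeft e (ofMul α), by rw [addOrderOf_transportedMulLeft, hα],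
    fun k hk1 hk2 x hx hfix => ?_⟩
  rw [← map_nsmul, ← ofMul_pow, transportedMulLeft_apply_eq_self_iff] at hfix
  have hdk : d ∣ k := hα ▸ orderOf_dvd_of_pow_eq_one (hfix.resolve_right hx)
  have := Nat.le_of_dvd (by omega) hdk
  omega

/-- For a prime `p ≡ 1 (mod 4)` and `d = (p+1)/2`, there is an automorphism `A` of
`(ℤ/pℤ)²` of order `d` such that every nonzero power `A^k` (`1 ≤ k ≤ d-1`) has no nonzero
fixed points; i.e. `⟨A⟩` acts freely on `(ℤ/pℤ)² \ {0}`. -/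
theorem exists_addAut_order_half_p_add_one_free
    (p : ℕ) (hp : p.Prime) (hmod : p % 4 = 1) (d : ℕ) (hd : d = (p + 1) / 2) :
    ∃ A : AddAut (ZMod p × ZMod p), addOrderOf A = d ∧
      ∀ k : ℕ, 1 ≤ k → k ≤ d - 1 →
        ∀ x : ZMod p × ZMod p, x ≠ 0 → (k • A) x ≠ x :=
  exists_addAut_order_half_p_add_one_free_general p hp d hd
end

section
/- Let A be a commutative ring, R = A[x₁,…,xₙ] with a permutation group G ≤ Sₙ acting by permuting the variables, and let B be any commutative A-algebra. Then taking invariants commutes with base change: (B ⊗_A R)^G = B ⊗_A R^G. -/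
open scoped TensorProduct

/-- The `A`-submodule of `G`-invariant polynomials in `A[x₁,…,xₙ]`, where the permutation
group `G ≤ Sₙ` acts by permuting the variables. -/
def invSubmodule {A : Type*} [CommRing A] {n : ℕ} (G : Subgroup (Equiv.Perm (Fin n))) :
    Submodule A (MvPolynomial (Fin n) A) where
  carrier := {p | ∀ g ∈ G, MvPolynomial.rename (g : Equiv.Perm (Fin n)) p = p}
  add_mem' := fun ha hb g hg => by rw [map_add, ha g hg, hb g hg]
  zero_mem' := fun g hg => by rw [map_zero]
  smul_mem' := fun c p hp g hg => by
    rw [Algebra.smul_def, map_mul, AlgHom.commutes, hp g hg, ← Algebra.smul_def]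

/-!
Via a basis `b` of `M` indexed by `X`, every element of `B ⊗[A] M` is uniquely `∑ₓ cₓ ⊗ b x`
with `c : X →₀ B`. If `G` permutes the basis, such an element is invariant exactly when `c` is
constant on `G`-orbits; grouping the support of `c` by orbits then writes it as a sum of terms
`c_O ⊗ ∑_{x ∈ O ∩ supp c} b x`, and each of these orbit sums is invariant in `M`. For
`M = A[x₁,…,xₙ]` the monomials form such a basis.
-/

open TensorProduct

namespace Representation

variable {A G M X : Type*} [CommRing A] [Group G] [AddCommGroup M] [Module A M] [MulAction G X]
  {ρ : Representation A G M} {b : Module.Basis X A M}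

theorem sum_basis_mem_invariants (hρ : ∀ g x, ρ g (b x) = b (g • x)) {T : Finset X}
    (hT : ∀ (g : G) x, g • x ∈ T ↔ x ∈ T) : ∑ x ∈ T, b x ∈ ρ.invariants := by
  intro g
  simp only [map_sum, hρ]
  exact Finset.sum_equiv (MulAction.toPerm g) (fun x => (hT g x).symm) fun _ _ => rfl

variable {B : Type*} [AddCommMonoid B] [Module A B]

theorem lTensor_sum_tmul_basis (hρ : ∀ g x, ρ g (b x) = b (g • x)) (g : G) (c : X →₀ B) :
    LinearMap.lTensor B (ρ g) (c.sum fun x m ↦ m ⊗ₜ b x) =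
      (c.mapDomain (g • ·)).sum fun x m ↦ m ⊗ₜ b x := by
  rw [Finsupp.sum_mapDomain_index (by simp) (by simp [add_tmul]), map_finsuppSum]
  simp [hρ]

theorem apply_smul_eq_of_forall_lTensor_eq (hρ : ∀ g x, ρ g (b x) = b (g • x)) {c : X →₀ B}
    (hc : ∀ g, LinearMap.lTensor B (ρ g) (c.sum fun x m ↦ m ⊗ₜ b x) =
      c.sum fun x m ↦ m ⊗ₜ b x) (g : G) (x : X) : c (g • x) = c x := by
  have h : c.mapDomain (g • ·) = c := by
    apply sum_tmul_basis_right_injective b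
    exact (lTensor_sum_tmul_basis hρ g c).symm.trans (hc g)
  rw [← h, Finsupp.mapDomain_apply (MulAction.injective g), h]

theorem sum_tmul_basis_mem_range_lTensor_invariants (hρ : ∀ g x, ρ g (b x) = b (g • x))
    {c : X →₀ B} (hc : ∀ (g : G) x, c (g • x) = c x) :
    (c.sum fun x m ↦ m ⊗ₜ b x) ∈ LinearMap.range (LinearMap.lTensor B ρ.invariants.subtype) := by
  classical
  let π : X → MulAction.orbitRel.Quotient G X := Quotient.mk _
  have hπ (g : G) (x : X) : π (g • x) = π x := Quotient.sound (MulAction.mem_orbit x g)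
  let cπ : MulAction.orbitRel.Quotient G X → B := Quotient.lift c fun _ y ⟨g, hg⟩ => hg ▸ hc g y
  have hsum : (c.sum fun x m ↦ m ⊗ₜ b x) =
      ∑ q ∈ c.support.image π, cπ q ⊗ₜ[A] ∑ x ∈ c.support with π x = q, b x := by
    rw [Finsupp.sum, Finset.sum_image']
    intro x _
    rw [tmul_sum]
    refine Finset.sum_congr rfl fun y hy => ?_
    rw [← (Finset.mem_filter.mp hy).2]
    rfl
  rw [hsum]
  refine Submodule.sum_mem _ fun q _ => ⟨cπ q ⊗ₜ ⟨_, sum_basis_mem_invariants hρ ?_⟩, rfl⟩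
  intro g x
  simp [hc, hπ]

theorem mem_range_lTensor_invariants_iff (hρ : ∀ g x, ρ g (b x) = b (g • x))
    (z : B ⊗[A] M) :
    z ∈ LinearMap.range (LinearMap.lTensor B ρ.invariants.subtype) ↔
      ∀ g, LinearMap.lTensor B (ρ g) z = z := by
  constructor
  · rintro ⟨y, rfl⟩ g
    rw [← LinearMap.lTensor_comp_apply]
    congr 2
    exact LinearMap.ext fun v => v.2 g
  · obtain ⟨c, rfl⟩ := eq_repr_basis_right b z
    intro hz
    exact sum_tmul_basis_mem_range_lTensor_invariants hρ
      (apply_smul_eq_of_forall_lTensor_eq hρ hz)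

end Representation

-- `Equiv.Perm σ` acts on exponent vectors by `g • d = d.mapDomain g`.
attribute [local instance] Finsupp.comapMulAction

namespace MvPolynomial

variable (σ A : Type*) [CommRing A]

noncomputable def renameRepresentation : Representation A (Equiv.Perm σ) (MvPolynomial σ A) where
  toFun g := (rename g).toLinearMap
  map_one' := by ext; simp
  map_mul' g h := by ext; simp [rename_rename]

variable {σ A}

theorem renameRepresentation_basisMonomials (g : Equiv.Perm σ) (d : σ →₀ ℕ) :
    renameRepresentation σ A g (basisMonomials σ A d) = basisMonomials σ A (g • d) := by
  simp [renameRepresentation, rename_monomial, Finsupp.comapSMul_def]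

end MvPolynomial

open MvPolynomial in
theorem invSubmodule_eq_invariants {A : Type*} [CommRing A] {n : ℕ}
    (G : Subgroup (Equiv.Perm (Fin n))) :
    invSubmodule (A := A) G =
      Representation.invariants ((renameRepresentation (Fin n) A).comp G.subtype) := by
  ext p
  exact ⟨fun hp g => hp g g.2, fun hp g hg => hp ⟨g, hg⟩⟩

/-- Taking invariants of a permutation action commutes with base change:
`(B ⊗_A R)^G = B ⊗_A R^G`, where `R = A[x₁,…,xₙ]` and `G ≤ Sₙ` permutes the variables. -/
theorem invariants_commute_with_base_change
    {A B : Type*} [CommRing A] [CommRing B] [Algebra A B] {n : ℕ}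
    (G : Subgroup (Equiv.Perm (Fin n))) (z : B ⊗[A] MvPolynomial (Fin n) A) :
    (∀ g ∈ G,
        LinearMap.lTensor B (MvPolynomial.rename (g : Equiv.Perm (Fin n)) :
          MvPolynomial (Fin n) A →ₐ[A] MvPolynomial (Fin n) A).toLinearMap z = z) ↔
      z ∈ LinearMap.range (LinearMap.lTensor B (invSubmodule (A := A) G).subtype) := by
  rw [invSubmodule_eq_invariants, Representation.mem_range_lTensor_invariants_iff
    (ρ := (MvPolynomial.renameRepresentation (Fin n) A).comp G.subtype)
    (b := MvPolynomial.basisMonomials (Fin n) A)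
    fun g => MvPolynomial.renameRepresentation_basisMonomials (g : Equiv.Perm (Fin n))]
  exact ⟨fun hz g => hz g g.2, fun hz g hg => hz ⟨g, hg⟩⟩
end

section
/- Let R be a noetherian commutative ring. Then Spec R is connected if and only if the bipartite 'containment graph' Γ_R is connected, where Γ_R has as vertices the minimal primes and the maximal ideals of R, with an edge between a minimal prime 𝔭 and a maximal ideal 𝔪 whenever 𝔭 ⊆ 𝔪. -/
/-- The bipartite containment graph of a commutative ring `R`: vertices are the minimal
primes and the maximal ideals, with an edge between a minimal prime `𝔭` and a maximal
ideal `𝔪` whenever `𝔭 ⊆ 𝔪`. -/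
def containmentGraph (R : Type*) [CommRing R] :
    SimpleGraph ({p : Ideal R // p ∈ minimalPrimes R} ⊕ {m : Ideal R // m.IsMaximal}) where
  Adj a b :=
    (∃ p m, a = Sum.inl p ∧ b = Sum.inr m ∧ p.1 ≤ m.1) ∨
    (∃ p m, a = Sum.inr m ∧ b = Sum.inl p ∧ p.1 ≤ m.1)
  symm := by
    constructor
    rintro a b (⟨p, m, h1, h2, h3⟩ | ⟨p, m, h1, h2, h3⟩)
    · exact Or.inr ⟨p, m, h2, h1, h3⟩
    · exact Or.inl ⟨p, m, h2, h1, h3⟩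
  loopless := by
    constructor
    rintro a (⟨p, m, rfl, h2, -⟩ | ⟨p, m, rfl, h2, -⟩) <;> simp at h2

/-!
For minimal primes `𝔭`, the closed sets `V(𝔭)` are irreducible, hence connected, and they cover
`Spec R`; noetherianity makes this cover finite. A space with a finite cover by closed connected
sets is connected iff the cover's intersection graph is connected: a chain of overlapping
connected sets has connected union, and conversely the union of the sets in one component of the
intersection graph is clopen. Finally `V(𝔭) ∩ V(𝔮) ≠ ∅` iff `𝔭` and `𝔮` lie in a common maximal
ideal, i.e. iff they are joined by a path of length two in `Γ_R`, and every maximal ideal is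
adjacent to some minimal prime.
-/

open Relation Set PrimeSpectrum

section ClosedCover

variable {X ι : Type*} [TopologicalSpace X] {Z : ι → Set X}

theorem exists_nonempty_inter_of_isClosed_cover [PreconnectedSpace X] [Finite ι]
    (hZ : ∀ i, IsClosed (Z i)) (hcover : ⋃ i, Z i = univ) {S : Set ι} {i j : ι}
    (hi : i ∈ S) (hj : j ∉ S) (hZi : (Z i).Nonempty) (hZj : (Z j).Nonempty) :
    ∃ k ∈ S, ∃ l ∉ S, (Z k ∩ Z l).Nonempty := by
  have hsub : univ ⊆ (⋃ k ∈ S, Z k) ∪ ⋃ l ∈ Sᶜ, Z l := by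
    intro x _
    obtain ⟨k, hxk⟩ := mem_iUnion.1 (hcover.symm ▸ mem_univ x : x ∈ ⋃ i, Z i)
    by_cases hk : k ∈ S
    · exact Or.inl (mem_biUnion hk hxk)
    · exact Or.inr (mem_biUnion hk hxk)
  obtain ⟨x, -, hxS, hxSc⟩ := isPreconnected_closed_iff.1 isPreconnected_univ _ _
    ((toFinite S).isClosed_biUnion fun k _ => hZ k)
    ((toFinite Sᶜ).isClosed_biUnion fun l _ => hZ l) hsub
    (by simpa using hZi.mono (subset_biUnion_of_mem hi))
    (by simpa using hZj.mono (subset_biUnion_of_mem (u := Z) (show j ∈ Sᶜ from hj)))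
  obtain ⟨k, hk, hxk⟩ := mem_iUnion₂.1 hxS
  obtain ⟨l, hl, hxl⟩ := mem_iUnion₂.1 hxSc
  exact ⟨k, hk, l, hl, x, hxk, hxl⟩

theorem preconnectedSpace_iff_reflTransGen_of_isClosed_cover [Finite ι]
    (hZ : ∀ i, IsClosed (Z i)) (hZconn : ∀ i, IsPreconnected (Z i)) (hne : ∀ i, (Z i).Nonempty)
    (hcover : ⋃ i, Z i = univ) :
    PreconnectedSpace X ↔ ∀ i j, ReflTransGen (fun i j => (Z i ∩ Z j).Nonempty) i j := by
  refine ⟨fun _ i j => ?_, fun h => ⟨hcover ▸ IsPreconnected.iUnion_of_reflTransGen hZconn h⟩⟩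
  by_contra hij
  obtain ⟨k, hk, l, hl, hkl⟩ := exists_nonempty_inter_of_isClosed_cover hZ hcover
    (S := {k | ReflTransGen (fun i j => (Z i ∩ Z j).Nonempty) i k}) ReflTransGen.refl hij
    (hne i) (hne j)
  exact hl (ReflTransGen.tail hk hkl)

end ClosedCover

theorem PrimeSpectrum.isPreconnected_zeroLocus_of_isPrime {R : Type*} [CommRing R]
    {p : Ideal R} (hp : p.IsPrime) : IsPreconnected (zeroLocus (p : Set R)) := by
  rw [← closure_singleton (x := ⟨p, hp⟩)]
  exact isIrreducible_singleton.closure.isConnected.isPreconnected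

theorem PrimeSpectrum.iUnion_zeroLocus_minimalPrimes {R : Type*} [CommRing R] :
    ⋃ p : {p : Ideal R // p ∈ minimalPrimes R}, zeroLocus (p.1 : Set R) = univ := by
  refine eq_univ_of_forall fun x => mem_iUnion.2 ?_
  obtain ⟨p, hp, hpx⟩ := Ideal.exists_minimalPrimes_le (bot_le : ⊥ ≤ x.asIdeal)
  exact ⟨⟨p, hp⟩, hpx⟩

namespace containmentGraph

variable {R : Type*} [CommRing R]

noncomputable def minimalPrimeBelow :
    {p : Ideal R // p ∈ minimalPrimes R} ⊕ {m : Ideal R // m.IsMaximal} →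
      {p : Ideal R // p ∈ minimalPrimes R}
  | .inl p => p
  | .inr m =>
    haveI := m.2.isPrime
    ⟨_, (Ideal.exists_minimalPrimes_le (bot_le : ⊥ ≤ m.1)).choose_spec.1⟩

theorem minimalPrimeBelow_inr_le (m : {m : Ideal R // m.IsMaximal}) :
    (minimalPrimeBelow (.inr m)).1 ≤ m.1 :=
  haveI := m.2.isPrime
  (Ideal.exists_minimalPrimes_le (bot_le : ⊥ ≤ m.1)).choose_spec.2

theorem reachable_inl_minimalPrimeBelow
    (v : {p : Ideal R // p ∈ minimalPrimes R} ⊕ {m : Ideal R // m.IsMaximal}) :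
    (containmentGraph R).Reachable v (.inl (minimalPrimeBelow v)) := by
  rcases v with p | m
  · rfl
  · exact SimpleGraph.Adj.reachable (Or.inr ⟨_, m, rfl, rfl, minimalPrimeBelow_inr_le m⟩)

theorem preconnected_iff :
    (containmentGraph R).Preconnected ↔
      ∀ p q, (containmentGraph R).Reachable (.inl p) (.inl q) :=
  ⟨fun h _ _ => h _ _, fun h u v => ((reachable_inl_minimalPrimeBelow u).trans
    (h _ _)).trans (reachable_inl_minimalPrimeBelow v).symm⟩

theorem reachable_inl_iff {p q : {p : Ideal R // p ∈ minimalPrimes R}} :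
    (containmentGraph R).Reachable (.inl p) (.inl q) ↔
      ReflTransGen (fun p q : {p : Ideal R // p ∈ minimalPrimes R} =>
        (zeroLocus (p.1 : Set R) ∩ zeroLocus q.1).Nonempty) p q := by
  rw [SimpleGraph.reachable_iff_reflTransGen]
  constructor
  · refine fun h => ReflTransGen.lift minimalPrimeBelow (fun u v huv => ?_) _ _ h
    rcases huv with ⟨p, m, rfl, rfl, hpm⟩ | ⟨p, m, rfl, rfl, hpm⟩
    · exact ⟨⟨m.1, m.2.isPrime⟩, hpm, minimalPrimeBelow_inr_le m⟩
    · exact ⟨⟨m.1, m.2.isPrime⟩, minimalPrimeBelow_inr_le m, hpm⟩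
  · refine fun h => ReflTransGen.lift' Sum.inl (fun p q ⟨x, hpx, hqx⟩ => ?_) _ _ h
    obtain ⟨m, hm, hxm⟩ := x.asIdeal.exists_le_maximal x.isPrime.ne_top
    exact .head (Or.inl ⟨p, ⟨m, hm⟩, rfl, rfl, (hpx : p.1 ≤ _).trans hxm⟩)
      (.single (Or.inr ⟨q, ⟨m, hm⟩, rfl, rfl, (hqx : q.1 ≤ _).trans hxm⟩))

end containmentGraph

/-- For a noetherian commutative ring `R`, the prime spectrum of `R` is connected if and
only if the bipartite containment graph on (minimal primes) ∪ (maximal ideals) is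
connected. -/
theorem connectedSpace_iff_containmentGraph_connected
    (R : Type*) [CommRing R] [IsNoetherianRing R] :
    ConnectedSpace (PrimeSpectrum R) ↔ (containmentGraph R).Connected := by
  have := (minimalPrimes.finite_of_isNoetherianRing R).to_subtype
  have hpre : PreconnectedSpace (PrimeSpectrum R) ↔ (containmentGraph R).Preconnected := by
    rw [preconnectedSpace_iff_reflTransGen_of_isClosed_cover
      (Z := fun p : {p : Ideal R // p ∈ minimalPrimes R} => zeroLocus (p.1 : Set R))
      (fun p => isClosed_zeroLocus _)
      (fun p => isPreconnected_zeroLocus_of_isPrime p.2.1.1)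
      (fun p => ⟨⟨p.1, p.2.1.1⟩, fun _ hx => hx⟩) iUnion_zeroLocus_minimalPrimes,
      containmentGraph.preconnected_iff]
    simp only [containmentGraph.reachable_inl_iff]
  have hne : Nonempty (PrimeSpectrum R) ↔
      Nonempty ({p : Ideal R // p ∈ minimalPrimes R} ⊕ {m : Ideal R // m.IsMaximal}) := by
    refine ⟨fun ⟨x⟩ => ?_, fun ⟨v⟩ => ⟨⟨_, (containmentGraph.minimalPrimeBelow v).2.1.1⟩⟩⟩
    obtain ⟨p, hp, -⟩ := Ideal.exists_minimalPrimes_le (bot_le : ⊥ ≤ x.asIdeal)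
    exact ⟨.inl ⟨p, hp⟩⟩
  rw [SimpleGraph.connected_iff, ← hpre, ← hne]
  exact ⟨fun h => ⟨h.toPreconnectedSpace, h.toNonempty⟩,
    fun ⟨h₁, h₂⟩ => { toPreconnectedSpace := h₁, toNonempty := h₂ }⟩
end

section
/- Let 𝓜 be a positive archimedean commutative monoid, R an 𝓜-graded commutative ring, and M an 𝓜-graded R-module. If R₊M = M, where R₊ = ⊕_{a≠0} R_a, then M = 0. (Graded Nakayama lemma.) -/
/-!
Write `i ≤ a` for `∃ b, b + i = a`. By induction on `n`: if no sum of `n` nonzero degrees is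
`≤ a`, then every element of `M` has zero components in all degrees `≤ a`. Such elements form a
submodule, so it suffices to check `s • w` for `s` homogeneous of nonzero degree `d`. Its
components in degrees `≤ a` only involve components of `w` in degrees `j` with `d + j ≤ a`, and no
sum of `n - 1` nonzero degrees is `≤ j`. The archimedean hypothesis provides such an `n` for every
degree.
-/

open DirectSum

section Vanishing

variable {ι R M : Type*} [AddCommMonoid ι] [DecidableEq ι] [Ring R] [AddCommGroup M]
  [Module R M] (𝒜 : ι → AddSubgroup R) (ℳ : ι → AddSubgroup M) [Decomposition ℳ]

theorem decompose_smul_eq_zero_of_mem [SetLike.GradedSMul 𝒜 ℳ] {d c : ι} {s : R}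
    (hs : s ∈ 𝒜 d) {w : M} (hw : ∀ i, d + i = c → decompose ℳ w i = 0) :
    decompose ℳ (s • w) c = 0 := by
  classical
  rw [← sum_support_decompose ℳ w, Finset.smul_sum, decompose_sum, DFinsupp.finsetSum_apply]
  refine Finset.sum_eq_zero fun i _ => ?_
  by_cases hi : d + i = c
  · rw [hw i hi, ZeroMemClass.coe_zero, smul_zero, decompose_zero, DirectSum.zero_apply]
  · exact Subtype.ext <|
      decompose_of_mem_ne ℳ (SetLike.GradedSMul.smul_mem hs (decompose ℳ w i).2) hi

def vanishingBelow [Decomposition 𝒜] [SetLike.GradedSMul 𝒜 ℳ] (c : ι) : Submodule R M where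
  carrier := {m | ∀ i, (∃ b, b + i = c) → decompose ℳ m i = 0}
  zero_mem' := by simp
  add_mem' hm hm' i hi := by
    rw [decompose_add, DirectSum.add_apply, hm i hi, hm' i hi, add_zero]
  smul_mem' r m hm i := by
    rintro ⟨b, hb⟩
    classical
    rw [← sum_support_decompose 𝒜 r, Finset.sum_smul, decompose_sum, DFinsupp.finsetSum_apply]
    refine Finset.sum_eq_zero fun d _ => decompose_smul_eq_zero_of_mem 𝒜 ℳ (decompose 𝒜 r d).2
      fun j hj => hm j ⟨b + d, by rw [add_assoc, hj, hb]⟩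

end Vanishing

section NonzeroSum

variable {ι : Type*} [AddCommMonoid ι]

def IsAboveNonzeroSum (n : ℕ) (a : ι) : Prop :=
  ∃ l : List ι, (∀ x ∈ l, x ≠ 0) ∧ l.length = n ∧ ∃ c, l.sum + c = a

theorem isAboveNonzeroSum_zero (a : ι) : IsAboveNonzeroSum 0 a :=
  ⟨[], by simp, rfl, a, zero_add a⟩

theorem IsAboveNonzeroSum.add_left {n : ℕ} {i : ι} (h : IsAboveNonzeroSum n i) {d : ι}
    (hd : d ≠ 0) (b : ι) : IsAboveNonzeroSum (n + 1) (b + (d + i)) := by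
  obtain ⟨l, hl, rfl, c, rfl⟩ := h
  refine ⟨d :: l, ?_, rfl, c + b, ?_⟩
  · simpa [List.forall_mem_cons] using ⟨hd, hl⟩
  · rw [List.sum_cons]
    abel

end NonzeroSum

theorem vanishingBelow_eq_top_of_not_isAboveNonzeroSum {ι R M : Type*} [AddCommMonoid ι]
    [DecidableEq ι] [CommRing R] [AddCommGroup M] [Module R M] (𝒜 : ι → AddSubgroup R)
    (ℳ : ι → AddSubgroup M) [Decomposition 𝒜] [Decomposition ℳ] [SetLike.GradedSMul 𝒜 ℳ]
    (h : Ideal.span (⋃ a ∈ {a : ι | a ≠ 0}, (𝒜 a : Set R)) • (⊤ : Submodule R M) = ⊤) {n : ℕ} :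
    ∀ {a : ι}, ¬IsAboveNonzeroSum n a → vanishingBelow 𝒜 ℳ a = ⊤ := by
  induction n with
  | zero => exact fun ha => absurd (isAboveNonzeroSum_zero _) ha
  | succ n ih =>
    intro a ha
    rw [eq_top_iff, ← h, Submodule.smul_le]
    intro r hr w _
    refine (Submodule.mem_colon (S := Set.univ)).mp (Ideal.span_le.mpr ?_ hr) w trivial
    refine Set.iUnion₂_subset fun d hd s hs => ?_
    rw [SetLike.mem_coe, Submodule.mem_colon]
    rintro w - i ⟨b, hb⟩
    refine decompose_smul_eq_zero_of_mem 𝒜 ℳ hs fun j hj => ?_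
    have hnj : ¬IsAboveNonzeroSum n j := fun hj' => ha (hb ▸ hj ▸ hj'.add_left hd b)
    exact (ih hnj).ge Submodule.mem_top j ⟨0, zero_add j⟩

theorem graded_nakayama_general
    {ι R M : Type*} [AddCommMonoid ι] [DecidableEq ι]
    [CommRing R] [AddCommGroup M] [Module R M]
    (harch : ∀ a : ι, ∃ ℓ : ℕ, ∀ l : List ι,
      (∀ x ∈ l, x ≠ 0) → l.length = ℓ → ¬∃ c : ι, l.sum + c = a)
    (𝒜 : ι → AddSubgroup R) [GradedRing 𝒜]
    (ℳ : ι → AddSubgroup M) [SetLike.GradedSMul 𝒜 ℳ] [DirectSum.Decomposition ℳ]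
    (h : (Ideal.span (⋃ a ∈ {a : ι | a ≠ 0}, ((𝒜 a : Set R)))) • (⊤ : Submodule R M) = ⊤) :
    Subsingleton M := by
  refine subsingleton_of_forall_eq 0 fun m =>
    (decompose ℳ).injective <| DirectSum.ext fun i => ?_
  obtain ⟨ℓ, hℓ⟩ := harch i
  have hi : ¬IsAboveNonzeroSum ℓ i := fun ⟨l, hl, hlen, hc⟩ => hℓ l hl hlen hc
  have hm : m ∈ vanishingBelow 𝒜 ℳ i :=
    (vanishingBelow_eq_top_of_not_isAboveNonzeroSum 𝒜 ℳ h hi).ge Submodule.mem_top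
  rw [hm i ⟨0, zero_add i⟩, decompose_zero, DirectSum.zero_apply]

/-- Graded Nakayama lemma: let `𝓜` (here `ι`) be a positive (cancellative, with
`a + b = 0 → a = 0 ∧ b = 0`) archimedean commutative monoid, `R` an `ι`-graded commutative
ring and `M` an `ι`-graded `R`-module.  If `R₊ M = M`, where `R₊` is the ideal generated by
the components of nonzero degree, then `M = 0`. -/
theorem graded_nakayama
    {ι R M : Type*} [AddCommMonoid ι] [DecidableEq ι]
    [CommRing R] [AddCommGroup M] [Module R M]
    (hcanc : ∀ a b c : ι, a + b = a + c → b = c)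
    (hpos : ∀ a b : ι, a + b = 0 → a = 0 ∧ b = 0)
    (harch : ∀ a : ι, ∃ ℓ : ℕ, ∀ l : List ι,
      (∀ x ∈ l, x ≠ 0) → l.length = ℓ → ¬∃ c : ι, l.sum + c = a)
    (𝒜 : ι → AddSubgroup R) [GradedRing 𝒜]
    (ℳ : ι → AddSubgroup M) [SetLike.GradedSMul 𝒜 ℳ] [DirectSum.Decomposition ℳ]
    (h : (Ideal.span (⋃ a ∈ {a : ι | a ≠ 0}, ((𝒜 a : Set R)))) • (⊤ : Submodule R M) = ⊤) :
    Subsingleton M :=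
  graded_nakayama_general harch 𝒜 ℳ h
end
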